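/- In a vector lattice X with x₀, x, y ∈ X, the following are equivalent: (1) x ∼_{x₀} y; (2) x⁺ ∼_{x₀} y⁺ and x⁻ ∼_{x₀} y⁻; (3) x ∨ y ∼_{x₀} x ∧ y; (4) x ∨ z ∼_{x₀} y ∨ z and x ∧ z ∼_{x₀} y ∧ z for all z ∈ X. -/
import Mathlib


def VLperp {X : Type*} [Lattice X] [AddCommGroup X] (u v : X) : Prop :=
  abs (abs u - abs v) = abs u + abs v

def VLsim {X : Type*} [Lattice X] [AddCommGroup X] (x₀ x y : X) : Prop :=
  VLperp (x - y) x₀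

section Aux

variable {X : Type*} [Lattice X] [AddCommGroup X]
  [CovariantClass X X (· + ·) (· ≤ ·)]

lemma VLperp_iff (u v : X) : VLperp u v ↔ |u| ⊓ |v| = 0 := by
  unfold VLperp
  have h1 : |(|u| - |v|)| = |u| ⊔ |v| - |u| ⊓ |v| := by
    rw [abs_sub_comm]; exact (sup_sub_inf_eq_abs_sub _ _).symm
  have h2 : |u| + |v| = |u| ⊓ |v| + (|u| ⊔ |v|) := (inf_add_sup _ _).symm
  rw [h1, h2]
  constructor
  · intro h
    have h3 : |u| ⊓ |v| + |u| ⊓ |v| = 0 := by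
      have := sub_eq_iff_eq_add.mp h
      linear_combination (norm := abel_nf) this.symm
    have hnn : 0 ≤ |u| ⊓ |v| := le_inf (abs_nonneg u) (abs_nonneg v)
    have : |u| ⊓ |v| ≤ 0 := by
      calc |u| ⊓ |v| ≤ |u| ⊓ |v| + |u| ⊓ |v| := le_add_of_nonneg_left hnn
      _ = 0 := h3
    exact le_antisymm this hnn
  · intro h
    rw [h]; abel

lemma VLperp_of_le {u u' v : X} (h : VLperp u v) (h' : |u'| ≤ |u|) : VLperp u' v := by
  rw [VLperp_iff] at h ⊢
  refine le_antisymm ?_ (le_inf (abs_nonneg _) (abs_nonneg _))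
  calc |u'| ⊓ |v| ≤ |u| ⊓ |v| := inf_le_inf_right _ h'
  _ = 0 := h

lemma VLperp_add {a b v : X} (ha : VLperp a v) (hb : VLperp b v) : VLperp (a + b) v := by
  rw [VLperp_iff] at ha hb ⊢
  have h1 : |a + b| ⊓ |v| ≤ |a| + |b| := by
    calc |a + b| ⊓ |v| ≤ |a + b| := inf_le_left
    _ ≤ |a| + |b| := abs_add_le _ _
  have h2 : |a + b| ⊓ |v| ≤ |a| + |v| := by
    calc |a + b| ⊓ |v| ≤ |v| := inf_le_right
    _ ≤ |a| + |v| := le_add_of_nonneg_left (abs_nonneg _)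
  have h3 : |a + b| ⊓ |v| ≤ |a| + |b| ⊓ |v| := by
    rw [add_inf]; exact le_inf h1 h2
  rw [hb, add_zero] at h3
  have h4 : |a + b| ⊓ |v| ≤ |a| ⊓ |v| := le_inf h3 inf_le_right
  refine le_antisymm ?_ (le_inf (abs_nonneg _) (abs_nonneg _))
  exact h4.trans ha.le


end Aux

theorem strong_relation_tfae {X : Type*} [Lattice X] [AddCommGroup X]
    [CovariantClass X X (· + ·) (· ≤ ·)] [Module ℝ X] [PosSMulMono ℝ X]
    (x₀ x y : X) :
    [VLsim x₀ x y,
     VLsim x₀ (x ⊔ 0) (y ⊔ 0) ∧ VLsim x₀ ((-x) ⊔ 0) ((-y) ⊔ 0),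
     VLsim x₀ (x ⊔ y) (x ⊓ y),
     ∀ z : X, VLsim x₀ (x ⊔ z) (y ⊔ z) ∧ VLsim x₀ (x ⊓ z) (y ⊓ z)].TFAE := by
  tfae_have 1 → 4 := by
    intro h z
    exact ⟨VLperp_of_le h (abs_sup_sub_sup_le_abs x y z),
           VLperp_of_le h (abs_inf_sub_inf_le_abs x y z)⟩
  tfae_have 4 → 2 := by
    intro h
    refine ⟨(h 0).1, ?_⟩
    have h2 := (h 0).2
    have hx : (-x) ⊔ 0 = -(x ⊓ 0) := by rw [neg_inf, neg_zero]
    have hy : (-y) ⊔ 0 = -(y ⊓ 0) := by rw [neg_inf, neg_zero]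
    have : (-x) ⊔ 0 - ((-y) ⊔ 0) = -(x ⊓ 0 - y ⊓ 0) := by rw [hx, hy]; abel
    unfold VLsim
    rw [this]
    unfold VLperp
    rw [abs_neg]
    exact h2
  tfae_have 2 → 1 := by
    rintro ⟨h1, h2⟩
    have key : x - y = (x ⊔ 0 - y ⊔ 0) + ((-y) ⊔ 0 - (-x) ⊔ 0) := by
      have hx : x ⊔ 0 - (-x) ⊔ 0 = x := by
        rw [← posPart_def, ← negPart_def]; exact posPart_sub_negPart x
      have hy : y ⊔ 0 - (-y) ⊔ 0 = y := by
        rw [← posPart_def, ← negPart_def]; exact posPart_sub_negPart y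
      have := congrArg₂ (· - ·) hx hy
      rw [← this]; abel
    unfold VLsim
    rw [key]
    refine VLperp_add h1 ?_
    have : (-y) ⊔ 0 - (-x) ⊔ 0 = -((-x) ⊔ 0 - (-y) ⊔ 0) := by abel
    rw [this]
    unfold VLsim VLperp at h2
    unfold VLperp
    rw [abs_neg]
    exact h2
  tfae_have 1 → 3 := by
    intro h
    unfold VLsim at h ⊢
    apply VLperp_of_le h
    rw [sup_sub_inf_eq_abs_sub x y, abs_abs, abs_sub_comm y x]
  tfae_have 3 → 1 := by
    intro h
    unfold VLsim at h ⊢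
    apply VLperp_of_le h
    rw [sup_sub_inf_eq_abs_sub x y, abs_abs, abs_sub_comm y x]
  tfae_finish
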